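/- Let V < 0 be continuous, and Φ(λ) = −tλ² + ∫_{x'}^x √(λ²−V(s)) ds with t > 0, x ≥ x', |x| ≥ |x'|, on the region K = {0 < λ ≤ R⟨x⟩^{-μ/2}}. Assume c₂M₁ ≤ ∫_{x'}^x (λ²−V(s))^{-1/2}ds ≤ M₁ on K. If t ≤ (c₂/4)M₁ then |Φ'(λ)| ≥ (c₂/2)M₁λ for λ ∈ K; if t ≥ M₁ then |Φ'(λ)| ≥ tλ for λ ∈ K. In both cases |Φ''(λ)| ≤ 2max(t, M₁) on K. -/

import Mathlib

/-!
Differentiating under the integral sign, `Φ'(λ) = λ (I(λ) - 2t)` with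
`I(λ) = ∫ (λ² - V)^{-1/2}`, and `Φ''(λ) = -2t + ∫ (-V) (λ² - V)^{-3/2}`, where the last
integrand lies between `0` and `(λ² - V)^{-1/2}`. Both differentiations are justified by
bounds uniform in `λ`: `|λ| (λ² - V)^{-1/2} ≤ 1` and `(-V) (λ² - V)^{-3/2} ≤ (-V)^{-1/2}`,
the latter continuous because `V < 0`. The two-sided bound `c₂ M₁ ≤ I(λ) ≤ M₁` therefore
keeps `I(λ) - 2t` away from zero in both regimes, and puts `Φ''(λ)` in `[-2t, M₁ - 2t]`.
-/

open Set intervalIntegral MeasureTheory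

theorem sq_sub_pos_of_neg {v : ℝ} (hv : v < 0) (l : ℝ) : 0 < l ^ 2 - v := by
  nlinarith [sq_nonneg l]

theorem hasDerivAt_sqrt_sq_sub {v l : ℝ} (h : 0 < l ^ 2 - v) :
    HasDerivAt (fun l => √(l ^ 2 - v)) (l / √(l ^ 2 - v)) l := by
  have hsq : HasDerivAt (fun l : ℝ => l ^ 2 - v) (2 * l) l := by
    simpa using (hasDerivAt_pow 2 l).sub_const v
  refine ((Real.hasDerivAt_sqrt h.ne').comp l hsq).congr_deriv ?_
  have : √(l ^ 2 - v) ≠ 0 := (Real.sqrt_pos.2 h).ne'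
  field_simp

theorem hasDerivAt_div_sqrt_sq_sub {v l : ℝ} (h : 0 < l ^ 2 - v) :
    HasDerivAt (fun l => l / √(l ^ 2 - v)) (-v / ((l ^ 2 - v) * √(l ^ 2 - v))) l := by
  have hpos : 0 < √(l ^ 2 - v) := Real.sqrt_pos.2 h
  refine ((hasDerivAt_id l).div (hasDerivAt_sqrt_sq_sub h) hpos.ne').congr_deriv ?_
  have hsq : √(l ^ 2 - v) ^ 2 = l ^ 2 - v := Real.sq_sqrt h.le
  field_simp
  rw [hsq, id]
  ring

theorem abs_div_sqrt_sq_sub_le_one {v : ℝ} (hv : v ≤ 0) (l : ℝ) :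
    |l / √(l ^ 2 - v)| ≤ 1 := by
  rw [abs_div, abs_of_nonneg (Real.sqrt_nonneg _), ← Real.sqrt_sq_eq_abs]
  exact div_le_one_of_le₀ (Real.sqrt_le_sqrt (by linarith)) (Real.sqrt_nonneg _)

theorem neg_div_mul_sqrt_sq_sub_nonneg {v : ℝ} (hv : v ≤ 0) (l : ℝ) :
    0 ≤ -v / ((l ^ 2 - v) * √(l ^ 2 - v)) := by
  have : 0 ≤ l ^ 2 - v := by nlinarith [sq_nonneg l]
  exact div_nonneg (by linarith) (by positivity)

theorem neg_div_mul_sqrt_sq_sub_le {v : ℝ} (hv : v ≤ 0) (l : ℝ) :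
    -v / ((l ^ 2 - v) * √(l ^ 2 - v)) ≤ (√(l ^ 2 - v))⁻¹ := by
  rw [div_mul_eq_div_div, div_eq_mul_inv (-v / _)]
  exact mul_le_of_le_one_left (by positivity)
    (div_le_one_of_le₀ (by nlinarith [sq_nonneg l]) (by nlinarith [sq_nonneg l]))

theorem rpow_neg_half_eq_inv_sqrt {u : ℝ} (h : 0 ≤ u) : u ^ (-(1 : ℝ) / 2) = (√u)⁻¹ := by
  rw [neg_div, Real.rpow_neg h, ← Real.sqrt_eq_rpow]

theorem hasDerivAt_intervalIntegral_of_abs_deriv_le {F F' : ℝ → ℝ → ℝ} {bound : ℝ → ℝ}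
    {a b l₀ : ℝ} (hF : ∀ l, Continuous (F l)) (hF' : Continuous (F' l₀))
    (hbound : Continuous bound) (hle : ∀ l s, |F' l s| ≤ bound s)
    (hderiv : ∀ l s, HasDerivAt (fun l => F l s) (F' l s) l) :
    HasDerivAt (fun l => ∫ s in a..b, F l s) (∫ s in a..b, F' l₀ s) l₀ :=
  (hasDerivAt_integral_of_dominated_loc_of_deriv_le (s := univ) Filter.univ_mem
    (.of_forall fun l => (hF l).aestronglyMeasurable) ((hF l₀).intervalIntegrable a b)
    hF'.aestronglyMeasurable (ae_of_all _ fun s _ l _ => hle l s)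
    (hbound.intervalIntegrable a b) (ae_of_all _ fun s _ l _ => hderiv l s)).2

section Phase

variable {V : ℝ → ℝ} {a b : ℝ}

theorem hasDerivAt_integral_sqrt_sq_sub (hV : Continuous V) (hneg : ∀ s, V s < 0) (l₀ : ℝ) :
    HasDerivAt (fun l => ∫ s in a..b, √(l ^ 2 - V s))
      (∫ s in a..b, l₀ / √(l₀ ^ 2 - V s)) l₀ := by
  refine hasDerivAt_intervalIntegral_of_abs_deriv_le (bound := fun _ => 1)
    (fun l => by fun_prop) ?_ continuous_const
    (fun l s => abs_div_sqrt_sq_sub_le_one (hneg s).le l)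
    (fun l s => hasDerivAt_sqrt_sq_sub (sq_sub_pos_of_neg (hneg s) l))
  exact continuous_const.div (by fun_prop) fun s =>
    (Real.sqrt_pos.2 (sq_sub_pos_of_neg (hneg s) l₀)).ne'

theorem hasDerivAt_integral_div_sqrt_sq_sub (hV : Continuous V) (hneg : ∀ s, V s < 0)
    (l₀ : ℝ) :
    HasDerivAt (fun l => ∫ s in a..b, l / √(l ^ 2 - V s))
      (∫ s in a..b, -V s / ((l₀ ^ 2 - V s) * √(l₀ ^ 2 - V s))) l₀ := by
  have hsqrt : ∀ l s, √(l ^ 2 - V s) ≠ 0 := fun l s =>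
    (Real.sqrt_pos.2 (sq_sub_pos_of_neg (hneg s) l)).ne'
  refine hasDerivAt_intervalIntegral_of_abs_deriv_le (bound := fun s => (√(-V s))⁻¹)
    (fun l => continuous_const.div (by fun_prop) (hsqrt l)) ?_
    ((hV.neg.sqrt).inv₀ fun s => (Real.sqrt_pos.2 (neg_pos.2 (hneg s))).ne')
    (fun l s => ?_) (fun l s => hasDerivAt_div_sqrt_sq_sub (sq_sub_pos_of_neg (hneg s) l))
  · exact hV.neg.div (by fun_prop) fun s =>
      mul_ne_zero (sq_sub_pos_of_neg (hneg s) l₀).ne' (hsqrt l₀ s)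
  · rw [abs_of_nonneg (neg_div_mul_sqrt_sq_sub_nonneg (hneg s).le l)]
    refine (neg_div_mul_sqrt_sq_sub_le (hneg s).le l).trans (inv_anti₀ ?_ ?_)
    · exact Real.sqrt_pos.2 (neg_pos.2 (hneg s))
    · exact Real.sqrt_le_sqrt (by nlinarith [sq_nonneg l])

theorem integral_div_sqrt_sq_sub_eq (hneg : ∀ s, V s ≤ 0) (l : ℝ) :
    ∫ s in a..b, l / √(l ^ 2 - V s) = l * ∫ s in a..b, (l ^ 2 - V s) ^ (-(1 : ℝ) / 2) := by
  rw [← intervalIntegral.integral_const_mul]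
  refine integral_congr fun s _ => ?_
  rw [rpow_neg_half_eq_inv_sqrt (by nlinarith [sq_nonneg l, hneg s]), div_eq_mul_inv]

theorem integral_neg_div_mul_sqrt_sq_sub_mem_Icc (hV : Continuous V) (hneg : ∀ s, V s < 0)
    (hab : a ≤ b) (l : ℝ) :
    ∫ s in a..b, -V s / ((l ^ 2 - V s) * √(l ^ 2 - V s)) ∈
      Icc 0 (∫ s in a..b, (l ^ 2 - V s) ^ (-(1 : ℝ) / 2)) := by
  have hsqrt : ∀ s, √(l ^ 2 - V s) ≠ 0 := fun s =>
    (Real.sqrt_pos.2 (sq_sub_pos_of_neg (hneg s) l)).ne'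
  refine ⟨integral_nonneg hab fun s _ => neg_div_mul_sqrt_sq_sub_nonneg (hneg s).le l, ?_⟩
  rw [integral_congr fun s _ => rpow_neg_half_eq_inv_sqrt (sq_sub_pos_of_neg (hneg s) l).le]
  refine integral_mono_on hab ?_ ?_ fun s _ => neg_div_mul_sqrt_sq_sub_le (hneg s).le l
  · exact (hV.neg.div (by fun_prop) fun s =>
      mul_ne_zero (sq_sub_pos_of_neg (hneg s) l).ne' (hsqrt s)).intervalIntegrable a b
  · exact ((show Continuous fun s => √(l ^ 2 - V s) by fun_prop).inv₀
      hsqrt).intervalIntegrable a b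

theorem hasDerivAt_phase (hV : Continuous V) (hneg : ∀ s, V s < 0) (t l : ℝ) :
    HasDerivAt (fun l => -t * l ^ 2 + ∫ s in a..b, √(l ^ 2 - V s))
      (-2 * t * l + ∫ s in a..b, l / √(l ^ 2 - V s)) l := by
  refine (((hasDerivAt_pow 2 l).const_mul (-t)).add
    (hasDerivAt_integral_sqrt_sq_sub hV hneg l)).congr_deriv ?_
  push_cast
  ring

theorem deriv_phase (hV : Continuous V) (hneg : ∀ s, V s < 0) (t l : ℝ) :
    deriv (fun l => -t * l ^ 2 + ∫ s in a..b, √(l ^ 2 - V s)) l =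
      l * ((∫ s in a..b, (l ^ 2 - V s) ^ (-(1 : ℝ) / 2)) - 2 * t) := by
  rw [(hasDerivAt_phase hV hneg t l).deriv, integral_div_sqrt_sq_sub_eq (fun s => (hneg s).le)]
  ring

theorem deriv_deriv_phase (hV : Continuous V) (hneg : ∀ s, V s < 0) (t l : ℝ) :
    deriv (deriv fun l => -t * l ^ 2 + ∫ s in a..b, √(l ^ 2 - V s)) l =
      -2 * t + ∫ s in a..b, -V s / ((l ^ 2 - V s) * √(l ^ 2 - V s)) := by
  have hderiv : (deriv fun l => -t * l ^ 2 + ∫ s in a..b, √(l ^ 2 - V s)) =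
      fun l => -2 * t * l + ∫ s in a..b, l / √(l ^ 2 - V s) :=
    funext fun l => (hasDerivAt_phase hV hneg t l).deriv
  rw [hderiv]
  exact ((((hasDerivAt_id l).const_mul (-2 * t)).add
    (hasDerivAt_integral_div_sqrt_sq_sub hV hneg l)).congr_deriv (by ring)).deriv

end Phase

theorem nonresonant_low_energy_phase_general (μ R : ℝ)
    (V : ℝ → ℝ) (hVc : Continuous V) (hneg : ∀ s, V s < 0)
    (t x x' c₂ : ℝ) (ht : 0 < t) (hxx' : x' ≤ x)
    (M₁ : ℝ)
    (hlow : ∀ l : ℝ, 0 < l → l ≤ R * (1 + x^2) ^ (-(μ/4)) →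
      c₂ * M₁ ≤ (∫ s in x'..x, (l^2 - V s) ^ (-(1:ℝ)/2)) ∧
      (∫ s in x'..x, (l^2 - V s) ^ (-(1:ℝ)/2)) ≤ M₁) :
    let Φ : ℝ → ℝ := fun l => -t * l^2 + ∫ s in x'..x, Real.sqrt (l^2 - V s)
    (t ≤ (c₂/4) * M₁ → ∀ l : ℝ, 0 < l → l ≤ R * (1 + x^2) ^ (-(μ/4)) →
      (c₂/2) * M₁ * l ≤ |deriv Φ l|) ∧
    (M₁ ≤ t → ∀ l : ℝ, 0 < l → l ≤ R * (1 + x^2) ^ (-(μ/4)) →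
      t * l ≤ |deriv Φ l|) ∧
    (∀ l : ℝ, 0 < l → l ≤ R * (1 + x^2) ^ (-(μ/4)) →
      |deriv (deriv Φ) l| ≤ 2 * max t M₁) := by
  intro Φ
  have hΦ' : ∀ l, deriv Φ l = l * ((∫ s in x'..x, (l ^ 2 - V s) ^ (-(1 : ℝ) / 2)) - 2 * t) :=
    deriv_phase hVc hneg t
  refine ⟨fun hsmall l hl hlK => ?_, fun hlarge l hl hlK => ?_, fun l hl hlK => ?_⟩
  · obtain ⟨hI, -⟩ := hlow l hl hlK
    rw [hΦ']
    exact le_abs.2 (.inl (by nlinarith))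
  · obtain ⟨-, hI⟩ := hlow l hl hlK
    rw [hΦ']
    exact le_abs.2 (.inr (by nlinarith))
  · obtain ⟨-, hI⟩ := hlow l hl hlK
    obtain ⟨hJ₀, hJ⟩ := integral_neg_div_mul_sqrt_sq_sub_mem_Icc hVc hneg hxx' l
    rw [deriv_deriv_phase hVc hneg t l, abs_le]
    constructor <;> linarith [le_max_left t M₁, le_max_right t M₁]

/-- Non-resonant low-energy phase bounds: on `K = {0 < λ ≤ R⟨x⟩^{-μ/2}}`, if
`t ≤ (c₂/4)M₁` then `|Φ'(λ)| ≥ (c₂/2)M₁λ`; if `t ≥ M₁` then `|Φ'(λ)| ≥ tλ`; and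
in both cases `|Φ''(λ)| ≤ 2 max(t, M₁)`. -/
theorem nonresonant_low_energy_phase (μ R : ℝ) (hμ : μ ∈ Ioo (0:ℝ) 2) (hR : 1 ≤ R)
    (V : ℝ → ℝ) (hVc : Continuous V) (hneg : ∀ s, V s < 0)
    (t x x' c₂ : ℝ) (ht : 0 < t) (hxx' : x' ≤ x) (hxa : |x'| ≤ |x|) (hc₂ : 0 < c₂)
    (M₁ : ℝ)
    (hM₁ : M₁ = ∫ s in x'..x, |V s| ^ (-(1:ℝ)/2))
    (hlow : ∀ l : ℝ, 0 < l → l ≤ R * (1 + x^2) ^ (-(μ/4)) →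
      c₂ * M₁ ≤ (∫ s in x'..x, (l^2 - V s) ^ (-(1:ℝ)/2)) ∧
      (∫ s in x'..x, (l^2 - V s) ^ (-(1:ℝ)/2)) ≤ M₁) :
    let Φ : ℝ → ℝ := fun l => -t * l^2 + ∫ s in x'..x, Real.sqrt (l^2 - V s)
    (t ≤ (c₂/4) * M₁ → ∀ l : ℝ, 0 < l → l ≤ R * (1 + x^2) ^ (-(μ/4)) →
      (c₂/2) * M₁ * l ≤ |deriv Φ l|) ∧
    (M₁ ≤ t → ∀ l : ℝ, 0 < l → l ≤ R * (1 + x^2) ^ (-(μ/4)) →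
      t * l ≤ |deriv Φ l|) ∧
    (∀ l : ℝ, 0 < l → l ≤ R * (1 + x^2) ^ (-(μ/4)) →
      |deriv (deriv Φ) l| ≤ 2 * max t M₁) :=
  nonresonant_low_energy_phase_general μ R V hVc hneg t x x' c₂ ht hxx' M₁ hlow
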